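/- Let G = (U ∪ V, E) be bipartite with |M(G)| > 0, fix u* ∈ U and v* ∈ V, and form G' by appending the path (u*, v', u'') to u* and the path (v*, u', v'') to v* (four new vertices, four new edges). Then |M(G')| = |M(G)|, and Σ_{v ∈ V'} |N_{u'',v}(G')| = Σ_{v ∈ V} |N_{u*,v}(G)| + |M(G)| + |N_{u*,v*}(G)|. -/

import Mathlib

/-- Matchings of a bipartite graph with parts `A`, `B` and edge relation `E`,
covering exactly the vertices `R ⊆ A` and `C ⊆ B`. -/
def matchOn {A B : Type*} [DecidableEq A] [DecidableEq B]
    (E : A → B → Prop) (R : Finset A) (C : Finset B) : Set (Finset (A × B)) :=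
  {M | M.card = R.card ∧ M.image Prod.fst = R ∧ M.image Prod.snd = C ∧
    ∀ p ∈ M, E p.1 p.2}

/-- The edge relation of the graph `G'` obtained from `G` by appending the path
`(u*, v', u'')` to `u*` and the path `(v*, u', v'')` to `v*`; on the `U`-side
`Sum.inr 0 = u'`, `Sum.inr 1 = u''`, and on the `V`-side `Sum.inr 0 = v'`,
`Sum.inr 1 = v''`.  The new edges are `{u*, v'}, {v', u''}, {v*, u'}, {u', v''}`. -/
def extendRel {U V : Type*} (E : U → V → Prop) (ustar : U) (vstar : V) :
    U ⊕ Fin 2 → V ⊕ Fin 2 → Prop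
  | Sum.inl u, Sum.inl v => E u v
  | Sum.inl u, Sum.inr j => u = ustar ∧ j = 0
  | Sum.inr i, Sum.inl v => i = 0 ∧ v = vstar
  | Sum.inr i, Sum.inr j => (i = 1 ∧ j = 0) ∨ (i = 0 ∧ j = 1)

/-! The appended vertices force edges. `u''` and `v''` are leaves, so every matching covering
them uses `{u'', v'}`, resp. `{u', v''}`; once `u''` is left uncovered, `u*` is the only
remaining neighbour of `v'`, and once `v''` is left uncovered, `v*` is the only remaining
neighbour of `u'`. Deleting a forced edge together with its two endpoints is a bijection on
matchings, and after at most two deletions only the vertices of `G` remain: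
`N_{u'',v}(G') ≅ N_{u*,v}(G)`, `N_{u'',v'}(G') ≅ M(G)`, `N_{u'',v''}(G') ≅ N_{u*,v*}(G)` and
`M(G') ≅ N_{u'',v'}(G')`. -/

open Finset

theorem Finset.image_erase_of_injOn {α β : Type*} [DecidableEq α] [DecidableEq β]
    {f : α → β} {s : Finset α} {x : α} (hf : Set.InjOn f s) (hx : x ∈ s) :
    (s.erase x).image f = (s.image f).erase (f x) := by
  ext y
  simp only [mem_image, mem_erase]
  constructor
  · rintro ⟨z, ⟨hzx, hz⟩, rfl⟩
    exact ⟨fun h => hzx (hf hz hx h), z, hz, rfl⟩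
  · rintro ⟨hy, z, hz, rfl⟩
    exact ⟨z, ⟨fun h => hy (h ▸ rfl), hz⟩, rfl⟩

section matchOn

variable {A B : Type*} [DecidableEq A] [DecidableEq B] {E : A → B → Prop}
  {R : Finset A} {C : Finset B} {M : Finset (A × B)} {a : A} {b : B}

theorem injOn_fst_of_mem_matchOn (hM : M ∈ matchOn E R C) :
    Set.InjOn Prod.fst (M : Set (A × B)) :=
  card_image_iff.mp (by rw [hM.2.1, hM.1])

theorem injOn_snd_of_mem_matchOn (hM : M ∈ matchOn E R C) (hRC : #R = #C) :
    Set.InjOn Prod.snd (M : Set (A × B)) :=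
  card_image_iff.mp (by rw [hM.2.2.1, hM.1, hRC])

theorem mem_of_mem_matchOn_of_unique_left (hM : M ∈ matchOn E R C) (ha : a ∈ R)
    (huniq : ∀ y ∈ C, E a y → y = b) : (a, b) ∈ M := by
  obtain ⟨p, hp, rfl⟩ := mem_image.mp (hM.2.1 ▸ ha)
  have hpC : p.2 ∈ C := hM.2.2.1 ▸ mem_image_of_mem _ hp
  rwa [← huniq p.2 hpC (hM.2.2.2 p hp)]

theorem mem_of_mem_matchOn_of_unique_right (hM : M ∈ matchOn E R C) (hb : b ∈ C)
    (huniq : ∀ x ∈ R, E x b → x = a) : (a, b) ∈ M := by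
  obtain ⟨p, hp, rfl⟩ := mem_image.mp (hM.2.2.1 ▸ hb)
  have hpR : p.1 ∈ R := hM.2.1 ▸ mem_image_of_mem _ hp
  rwa [← huniq p.1 hpR (hM.2.2.2 p hp)]

theorem pair_notMem_of_mem_matchOn_erase {C' : Finset B}
    (hM : M ∈ matchOn E (R.erase a) C') :
    (a, b) ∉ M := fun h => by
  have := hM.2.1 ▸ mem_image_of_mem Prod.fst h
  simp at this

theorem insert_mem_matchOn (hM : M ∈ matchOn E (R.erase a) (C.erase b)) (ha : a ∈ R)
    (hb : b ∈ C) (hab : E a b) : insert (a, b) M ∈ matchOn E R C := by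
  have hnotMem : (a, b) ∉ M := pair_notMem_of_mem_matchOn_erase hM
  obtain ⟨hcard, hfst, hsnd, hedge⟩ := hM
  refine ⟨?_, ?_, ?_, ?_⟩
  · rw [card_insert_of_notMem hnotMem, hcard, card_erase_add_one ha]
  · rw [image_insert, hfst, insert_erase ha]
  · rw [image_insert, hsnd, insert_erase hb]
  · simpa [hab] using hedge

theorem erase_mem_matchOn (hM : M ∈ matchOn E R C) (hRC : #R = #C) (hab : (a, b) ∈ M) :
    M.erase (a, b) ∈ matchOn E (R.erase a) (C.erase b) := by
  refine ⟨?_, ?_, ?_, fun p hp => hM.2.2.2 p (mem_of_mem_erase hp)⟩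
  · rw [card_erase_of_mem hab, card_erase_of_mem (hM.2.1 ▸ mem_image_of_mem _ hab), hM.1]
  · rw [image_erase_of_injOn (injOn_fst_of_mem_matchOn hM) hab, hM.2.1]
  · rw [image_erase_of_injOn (injOn_snd_of_mem_matchOn hM hRC) hab, hM.2.2.1]

theorem ncard_matchOn_eq_ncard_erase (ha : a ∈ R) (hb : b ∈ C) (hab : E a b)
    (hRC : #R = #C) (hforced : ∀ M ∈ matchOn E R C, (a, b) ∈ M) :
    (matchOn E R C).ncard = (matchOn E (R.erase a) (C.erase b)).ncard := by
  have himage : matchOn E R C = insert (a, b) '' matchOn E (R.erase a) (C.erase b) := by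
    ext M
    refine ⟨fun hM => ⟨M.erase (a, b), erase_mem_matchOn hM hRC (hforced M hM),
      insert_erase (hforced M hM)⟩, ?_⟩
    rintro ⟨N, hN, rfl⟩
    exact insert_mem_matchOn hN ha hb hab
  rw [himage]
  refine Set.InjOn.ncard_image fun N hN N' hN' h => ?_
  rw [← erase_insert (pair_notMem_of_mem_matchOn_erase hN), h,
    erase_insert (pair_notMem_of_mem_matchOn_erase hN')]

end matchOn

section map

variable {A A' B B' : Type*} [DecidableEq A] [DecidableEq A'] [DecidableEq B] [DecidableEq B']
  {E : A → B → Prop} {E' : A' → B' → Prop} {R : Finset A} {C : Finset B}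

theorem map_mem_matchOn_map_iff (f : A ↪ A') (g : B ↪ B')
    (hE : ∀ a b, E' (f a) (g b) ↔ E a b) {M : Finset (A × B)} :
    M.map (f.prodMap g) ∈ matchOn E' (R.map f) (C.map g) ↔ M ∈ matchOn E R C := by
  have hfst : (M.map (f.prodMap g)).image Prod.fst = (M.image Prod.fst).map f := by
    simp [map_eq_image, image_image, Function.comp_def]
  have hsnd : (M.map (f.prodMap g)).image Prod.snd = (M.image Prod.snd).map g := by
    simp [map_eq_image, image_image, Function.comp_def]
  simp only [matchOn, Set.mem_ofPred_eq, card_map, hfst, hsnd, map_inj, forall_mem_map,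
    Function.Embedding.coe_prodMap, Prod.map_fst, Prod.map_snd, hE]

theorem ncard_matchOn_map (f : A ↪ A') (g : B ↪ B') (hE : ∀ a b, E' (f a) (g b) ↔ E a b) :
    (matchOn E' (R.map f) (C.map g)).ncard = (matchOn E R C).ncard := by
  have himage : matchOn E' (R.map f) (C.map g) = map (f.prodMap g) '' matchOn E R C := by
    ext M'
    refine ⟨fun hM' => ?_, ?_⟩
    · have hsub : M' ⊆ (R ×ˢ C).map (f.prodMap g) := by
        rw [prodMap_map_product, ← hM'.2.1, ← hM'.2.2.1]
        exact subset_product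
      obtain ⟨M, -, rfl⟩ := subset_map_iff.mp hsub
      exact ⟨M, (map_mem_matchOn_map_iff f g hE).mp hM', rfl⟩
    · rintro ⟨M, hM, rfl⟩
      exact (map_mem_matchOn_map_iff f g hE).mpr hM
  rw [himage, Set.ncard_image_of_injective _ (map_injective _)]

end map

theorem erase_inr_erase_inr_univ {A : Type*} [Fintype A] [DecidableEq A] {i j : Fin 2}
    (hij : i ≠ j) :
    ((univ : Finset (A ⊕ Fin 2)).erase (.inr i)).erase (.inr j) = univ.map .inl := by
  ext x
  rcases x with a | k
  · simp
  · simp only [mem_erase, ne_eq, Sum.inr.injEq, mem_univ, and_true, mem_map,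
      Function.Embedding.inl_apply, reduceCtorEq, and_false, exists_false, iff_false, not_and,
      not_not]
    omega

section extendRel

variable {U V : Type*} {E : U → V → Prop} {ustar : U} {vstar : V}

@[simp]
theorem extendRel_inr_one_left {y : V ⊕ Fin 2} :
    extendRel E ustar vstar (.inr 1) y ↔ y = .inr 0 := by
  rcases y with v | j <;> simp [extendRel]

@[simp]
theorem extendRel_inr_one_right {x : U ⊕ Fin 2} :
    extendRel E ustar vstar x (.inr 1) ↔ x = .inr 0 := by
  rcases x with u | i <;> simp [extendRel]

@[simp]
theorem extendRel_inr_zero_left {y : V ⊕ Fin 2} :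
    extendRel E ustar vstar (.inr 0) y ↔ y = .inl vstar ∨ y = .inr 1 := by
  rcases y with v | j <;> simp [extendRel, eq_comm]

@[simp]
theorem extendRel_inr_zero_right {x : U ⊕ Fin 2} :
    extendRel E ustar vstar x (.inr 0) ↔ x = .inl ustar ∨ x = .inr 1 := by
  rcases x with u | i <;> simp [extendRel]

variable [DecidableEq U] [DecidableEq V]

theorem ncard_matchOn_extendRel_map_inl (R : Finset U) (C : Finset V) :
    (matchOn (extendRel E ustar vstar) (R.map .inl) (C.map .inl)).ncard =
      (matchOn E R C).ncard :=
  ncard_matchOn_map _ _ fun _ _ => Iff.rfl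

variable [Fintype U] [Fintype V]

theorem ncard_matchOn_extendRel_erase_inr_one_inr_zero
    (hcard : Fintype.card U = Fintype.card V) :
    (matchOn (extendRel E ustar vstar) (univ.erase (.inr 1)) (univ.erase (.inr 0))).ncard =
      (matchOn E univ univ).ncard := by
  rw [ncard_matchOn_eq_ncard_erase (a := .inr 0) (b := .inr 1) (by simp) (by simp) (by simp)
      (by simp [card_erase_of_mem, hcard])
      fun M hM => mem_of_mem_matchOn_of_unique_right hM (by simp) fun _ _ => by simp,
    erase_inr_erase_inr_univ (by decide), erase_inr_erase_inr_univ (by decide)]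
  exact ncard_matchOn_extendRel_map_inl univ univ

theorem ncard_matchOn_extendRel_univ_univ (hcard : Fintype.card U = Fintype.card V) :
    (matchOn (extendRel E ustar vstar) univ univ).ncard = (matchOn E univ univ).ncard := by
  rw [ncard_matchOn_eq_ncard_erase (a := .inr 1) (b := .inr 0) (by simp) (by simp) (by simp)
      (by simp [hcard])
      fun M hM => mem_of_mem_matchOn_of_unique_left hM (by simp) fun _ _ => by simp]
  exact ncard_matchOn_extendRel_erase_inr_one_inr_zero hcard

theorem ncard_matchOn_extendRel_erase_inr_one_inl (hcard : Fintype.card U = Fintype.card V)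
    (v : V) :
    (matchOn (extendRel E ustar vstar) (univ.erase (.inr 1)) (univ.erase (.inl v))).ncard =
      (matchOn E (univ.erase ustar) (univ.erase v)).ncard := by
  rw [ncard_matchOn_eq_ncard_erase (a := .inr 0) (b := .inr 1) (by simp) (by simp) (by simp)
      (by simp [card_erase_of_mem, hcard])
      fun M hM => mem_of_mem_matchOn_of_unique_right hM (by simp) fun _ _ => by simp,
    ncard_matchOn_eq_ncard_erase (a := .inl ustar) (b := .inr 0) (by simp) (by simp) (by simp)
      (by simp [card_erase_of_mem, hcard])
      fun M hM => mem_of_mem_matchOn_of_unique_right hM (by simp) fun _ hx => by simp_all,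
    erase_right_comm (a := (.inl v : V ⊕ Fin 2)), erase_right_comm (a := (.inl v : V ⊕ Fin 2)),
    erase_inr_erase_inr_univ (by decide), erase_inr_erase_inr_univ (by decide)]
  simpa only [map_erase, Function.Embedding.inl_apply] using
    ncard_matchOn_extendRel_map_inl (univ.erase ustar) (univ.erase v)

theorem ncard_matchOn_extendRel_erase_inr_one_inr_one
    (hcard : Fintype.card U = Fintype.card V) :
    (matchOn (extendRel E ustar vstar) (univ.erase (.inr 1)) (univ.erase (.inr 1))).ncard =
      (matchOn E (univ.erase ustar) (univ.erase vstar)).ncard := by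
  rw [ncard_matchOn_eq_ncard_erase (a := .inl ustar) (b := .inr 0) (by simp) (by simp) (by simp)
      (by simp [card_erase_of_mem, hcard])
      fun M hM => mem_of_mem_matchOn_of_unique_right hM (by simp) fun _ hx => by simp_all,
    ncard_matchOn_eq_ncard_erase (a := .inr 0) (b := .inl vstar) (by simp) (by simp) (by simp)
      (by simp [card_erase_of_mem, hcard])
      fun M hM => mem_of_mem_matchOn_of_unique_left hM (by simp) fun _ hy => by simp_all,
    erase_right_comm (a := (.inl ustar : U ⊕ Fin 2)),
    erase_inr_erase_inr_univ (by decide), erase_inr_erase_inr_univ (by decide)]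
  simpa only [map_erase, Function.Embedding.inl_apply] using
    ncard_matchOn_extendRel_map_inl (univ.erase ustar) (univ.erase vstar)

end extendRel

theorem appended_paths_near_perfect_identity_general {U V : Type*}
    [Fintype U] [Fintype V] [DecidableEq U] [DecidableEq V]
    (E : U → V → Prop) (ustar : U) (vstar : V)
    (hcard : Fintype.card U = Fintype.card V) :
    Set.ncard (matchOn (extendRel E ustar vstar) Finset.univ Finset.univ) =
      Set.ncard (matchOn E Finset.univ Finset.univ) ∧
    ∑ v : V ⊕ Fin 2,
        Set.ncard (matchOn (extendRel E ustar vstar)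
          (Finset.univ.erase (Sum.inr 1)) (Finset.univ.erase v)) =
      (∑ v : V, Set.ncard (matchOn E (Finset.univ.erase ustar) (Finset.univ.erase v))) +
        Set.ncard (matchOn E Finset.univ Finset.univ) +
        Set.ncard (matchOn E (Finset.univ.erase ustar) (Finset.univ.erase vstar)) := by
  refine ⟨ncard_matchOn_extendRel_univ_univ hcard, ?_⟩
  rw [Fintype.sum_sum_type, Fin.sum_univ_two, add_assoc,
    ncard_matchOn_extendRel_erase_inr_one_inr_zero hcard,
    ncard_matchOn_extendRel_erase_inr_one_inr_one hcard]
  simp only [ncard_matchOn_extendRel_erase_inr_one_inl hcard]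

/-- Let `G = (U ∪ V, E)` be bipartite with `|M(G)| > 0`, fix `u* ∈ U`, `v* ∈ V`,
and form `G'` by appending the paths `(u*, v', u'')` and `(v*, u', v'')`.  Then
`|M(G')| = |M(G)|` and
`Σ_{v ∈ V'} |N_{u'',v}(G')| = Σ_{v ∈ V} |N_{u*,v}(G)| + |M(G)| + |N_{u*,v*}(G)|`. -/
theorem appended_paths_near_perfect_identity {U V : Type*}
    [Fintype U] [Fintype V] [DecidableEq U] [DecidableEq V]
    (E : U → V → Prop) (ustar : U) (vstar : V)
    (hcard : Fintype.card U = Fintype.card V)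
    (hM : 0 < Set.ncard (matchOn E Finset.univ Finset.univ)) :
    Set.ncard (matchOn (extendRel E ustar vstar) Finset.univ Finset.univ) =
      Set.ncard (matchOn E Finset.univ Finset.univ) ∧
    ∑ v : V ⊕ Fin 2,
        Set.ncard (matchOn (extendRel E ustar vstar)
          (Finset.univ.erase (Sum.inr 1)) (Finset.univ.erase v)) =
      (∑ v : V, Set.ncard (matchOn E (Finset.univ.erase ustar) (Finset.univ.erase v))) +
        Set.ncard (matchOn E Finset.univ Finset.univ) +
        Set.ncard (matchOn E (Finset.univ.erase ustar) (Finset.univ.erase vstar)) :=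
  appended_paths_near_perfect_identity_general E ustar vstar hcard
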